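/- Let x : ℝ → ℝⁿ be a twice differentiable curve with x(t) ≠ 0 for all t which solves the Kepler problem ẍ(t) = −x(t)/|x(t)|³. Let A₀ ∈ ℝⁿ be the (conserved) Laplace–Runge–Lenz vector with components (A₀)_i = x_i(0) |ẋ(0)|² − ẋ_i(0) ⟨x(0), ẋ(0)⟩ − x_i(0)/|x(0)|, and let L₀ = |x(0)|² |ẋ(0)|² − ⟨x(0), ẋ(0)⟩². Then for all t, |x(t)| + ⟨A₀, x(t)⟩ = L₀; that is, the orbit lies on the conic section |x| = L₀ − ⟨A₀, x⟩ (Kepler's first law in implicit form). -/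

import Mathlib

/-!
The Laplace–Runge–Lenz vector `A(x, v) = |v|² x - ⟨x, v⟩ v - x / |x|` is a first integral of the
Kepler flow. Since `⟨A(x, v), v⟩ = -⟨x, v⟩ / |x|` is minus the derivative of `|x|` along the flow,
`|x(t)| + ⟨A₀, x(t)⟩` is constant, and at `t = 0` it equals
`⟨A₀, x(0)⟩ + |x(0)| = |x(0)|² |ẋ(0)|² - ⟨x(0), ẋ(0)⟩²`.
-/

open scoped RealInnerProductSpace

variable {E : Type*} [NormedAddCommGroup E] [InnerProductSpace ℝ E]

theorem HasDerivAt.norm {f : ℝ → E} {f' : E} {t : ℝ} (hf : HasDerivAt f f' t) (h0 : f t ≠ 0) :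
    HasDerivAt (‖f ·‖) (⟪f t, f'⟫ / ‖f t‖) t := by
  have h := hf.norm_sq.sqrt (by positivity)
  simp only [Real.sqrt_sq (norm_nonneg _)] at h
  convert h using 1
  field_simp

noncomputable def laplaceRungeLenz (x v : E) : E := ‖v‖ ^ 2 • x - ⟪x, v⟫ • v - ‖x‖⁻¹ • x

theorem inner_laplaceRungeLenz_position (x v : E) :
    ⟪laplaceRungeLenz x v, x⟫ = ‖x‖ ^ 2 * ‖v‖ ^ 2 - ⟪x, v⟫ ^ 2 - ‖x‖ := by
  simp only [laplaceRungeLenz, inner_sub_left, real_inner_smul_left, real_inner_self_eq_norm_sq,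
    real_inner_comm x v]
  rcases eq_or_ne ‖x‖ 0 with h | h
  · simp [h, sq]
  · field_simp

theorem inner_laplaceRungeLenz_velocity (x v : E) :
    ⟪laplaceRungeLenz x v, v⟫ = -(⟪x, v⟫ / ‖x‖) := by
  simp only [laplaceRungeLenz, inner_sub_left, real_inner_smul_left, real_inner_self_eq_norm_sq]
  ring

theorem hasDerivAt_laplaceRungeLenz {x v : ℝ → E} {t : ℝ} (hx : HasDerivAt x (v t) t)
    (hv : HasDerivAt v (-((‖x t‖ ^ 3)⁻¹ • x t)) t) (hx0 : x t ≠ 0) :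
    HasDerivAt (fun s => laplaceRungeLenz (x s) (v s)) 0 t := by
  have hr : ‖x t‖ ≠ 0 := norm_ne_zero_iff.2 hx0
  have h : HasDerivAt (fun s => laplaceRungeLenz (x s) (v s)) _ t :=
    ((hv.norm_sq.smul hx).sub ((hx.inner ℝ hv).smul hv)).sub (((hx.norm hx0).inv hr).smul hx)
  convert h using 1
  simp only [Pi.inv_apply, inner_neg_right, real_inner_smul_right, real_inner_self_eq_norm_sq,
    real_inner_comm (x t) (v t)]
  have key : (‖x t‖ ^ 3)⁻¹ * ‖x t‖ ^ 2 = ‖x t‖⁻¹ := by field_simp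
  rw [key]
  module

section KeplerOrbit

variable {x v : ℝ → E}

theorem laplaceRungeLenz_eq (hx : ∀ t, HasDerivAt x (v t) t)
    (hv : ∀ t, HasDerivAt v (-((‖x t‖ ^ 3)⁻¹ • x t)) t) (hx0 : ∀ t, x t ≠ 0) (s t : ℝ) :
    laplaceRungeLenz (x t) (v t) = laplaceRungeLenz (x s) (v s) :=
  have h := fun u => hasDerivAt_laplaceRungeLenz (hx u) (hv u) (hx0 u)
  is_const_of_deriv_eq_zero (fun u => (h u).differentiableAt) (fun u => (h u).deriv) t s

theorem norm_add_inner_laplaceRungeLenz_eq (hx : ∀ t, HasDerivAt x (v t) t)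
    (hv : ∀ t, HasDerivAt v (-((‖x t‖ ^ 3)⁻¹ • x t)) t) (hx0 : ∀ t, x t ≠ 0) (s t : ℝ) :
    ‖x t‖ + ⟪laplaceRungeLenz (x s) (v s), x t⟫ = ‖x s‖ ^ 2 * ‖v s‖ ^ 2 - ⟪x s, v s⟫ ^ 2 := by
  have hderiv (u : ℝ) :
      HasDerivAt (fun u => ‖x u‖ + ⟪laplaceRungeLenz (x s) (v s), x u⟫) 0 u := by
    refine (((hx u).norm (hx0 u)).add ((hasDerivAt_const u _).inner ℝ (hx u))).congr_deriv ?_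
    rw [inner_zero_left, add_zero, ← laplaceRungeLenz_eq hx hv hx0 s u,
      inner_laplaceRungeLenz_velocity, add_neg_cancel]
  calc ‖x t‖ + ⟪laplaceRungeLenz (x s) (v s), x t⟫
      = ‖x s‖ + ⟪laplaceRungeLenz (x s) (v s), x s⟫ :=
        is_const_of_deriv_eq_zero (fun u => (hderiv u).differentiableAt)
          (fun u => (hderiv u).deriv) t s
    _ = ‖x s‖ ^ 2 * ‖v s‖ ^ 2 - ⟪x s, v s⟫ ^ 2 := by
        rw [inner_laplaceRungeLenz_position]; ring

end KeplerOrbit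

/-- **Kepler's first law, implicit conic-section form.**
If `x : ℝ → ℝⁿ` solves the Kepler problem `ẍ = −x/|x|³`, with `A₀` the (conserved)
Laplace–Runge–Lenz vector at time `0` and `L₀ = |x(0)|²|ẋ(0)|² − ⟨x(0), ẋ(0)⟩²`, then
for all `t`, `|x(t)| + ⟨A₀, x(t)⟩ = L₀`. -/
theorem kepler_first_law (n : ℕ) (x : ℝ → EuclideanSpace ℝ (Fin n))
    (hx1 : ∀ t, DifferentiableAt ℝ x t)
    (hx2 : ∀ t, DifferentiableAt ℝ (deriv x) t)
    (hx0 : ∀ t, x t ≠ 0)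
    (hkep : ∀ t, deriv (deriv x) t = -((‖x t‖ ^ 3)⁻¹ • x t))
    (A₀ : EuclideanSpace ℝ (Fin n))
    (hA₀ : ∀ i, A₀ i = x 0 i * ‖deriv x 0‖ ^ 2
        - deriv x 0 i * (inner ℝ (x 0) (deriv x 0) : ℝ) - x 0 i / ‖x 0‖)
    (L₀ : ℝ)
    (hL₀ : L₀ = ‖x 0‖ ^ 2 * ‖deriv x 0‖ ^ 2 - (inner ℝ (x 0) (deriv x 0) : ℝ) ^ 2) :
    ∀ t : ℝ, ‖x t‖ + (inner ℝ A₀ (x t) : ℝ) = L₀ := by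
  have hv (t : ℝ) : HasDerivAt (deriv x) (-((‖x t‖ ^ 3)⁻¹ • x t)) t :=
    hkep t ▸ (hx2 t).hasDerivAt
  have hA : A₀ = laplaceRungeLenz (x 0) (deriv x 0) := by
    ext i
    simp only [hA₀, laplaceRungeLenz, PiLp.sub_apply, PiLp.smul_apply, smul_eq_mul]
    ring
  subst hA hL₀
  exact norm_add_inner_laplaceRungeLenz_eq (fun t => (hx1 t).hasDerivAt) hv hx0 0
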